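/- arXiv:2602.17695 — 2 statements merged into one kernel-verified Lean document; each statement's English description precedes it below -/
import Mathlib

section
/- Let r : Y → ℝ be a reward, β > 0, π_base and π* strictly positive distributions with r(y) = β log(π*(y)/π_base(y)) + β log Z for a constant Z > 0. Define the Bradley–Terry probability p(y₁ ≻ y₂) = exp(r(y₁)) / (exp(r(y₁)) + exp(r(y₂))). Then p(y₁ ≻ y₂) = 1 / (1 + exp(β log(π*(y₂)/π_base(y₂)) − β log(π*(y₁)/π_base(y₁)))). -/
open Real

theorem Real.exp_div_exp_add_exp (a b : ℝ) :
    exp a / (exp a + exp b) = 1 / (1 + exp (b - a)) := by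
  rw [exp_sub]
  field_simp

theorem dpo_bradley_terry_identity_general
    {Y : Type*}
    (π_base π_star : Y → ℝ)
    (r : Y → ℝ) (β : ℝ)
    (Z : ℝ)
    (hr : ∀ y, r y = β * Real.log (π_star y / π_base y) + β * Real.log Z)
    (y₁ y₂ : Y) :
    Real.exp (r y₁) / (Real.exp (r y₁) + Real.exp (r y₂))
      = 1 / (1 + Real.exp (β * Real.log (π_star y₂ / π_base y₂)
            - β * Real.log (π_star y₁ / π_base y₁))) := by
  have reward_margin : r y₂ - r y₁ = β * Real.log (π_star y₂ / π_base y₂)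
      - β * Real.log (π_star y₁ / π_base y₁) := by
    rw [hr, hr]; ring
  rw [exp_div_exp_add_exp, reward_margin]

theorem dpo_bradley_terry_identity
    {Y : Type*}
    (π_base π_star : Y → ℝ)
    (hbpos : ∀ y, 0 < π_base y) (hspos : ∀ y, 0 < π_star y)
    (r : Y → ℝ) (β : ℝ) (hβ : 0 < β)
    (Z : ℝ) (hZ : 0 < Z)
    (hr : ∀ y, r y = β * Real.log (π_star y / π_base y) + β * Real.log Z)
    (y₁ y₂ : Y) :
    Real.exp (r y₁) / (Real.exp (r y₁) + Real.exp (r y₂))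
      = 1 / (1 + Real.exp (β * Real.log (π_star y₂ / π_base y₂)
            - β * Real.log (π_star y₁ / π_base y₁))) :=
  dpo_bradley_terry_identity_general π_base π_star r β Z hr y₁ y₂
end

section
/- Let F : Set(A) → ℝ be a set function on subsets of a finite ground set A, with F(∅) = 0, F monotone (S ⊆ T implies F(S) ≤ F(T)), and submodularity ratio γ ∈ (0,1], meaning for all S ⊆ A and L ⊆ A∖S: Σ_{a∈L} (F(S∪{a}) − F(S)) ≥ γ·(F(S∪L) − F(S)). Let S* be an optimal solution of max_{|A'| ≤ k} F(A'), and let S₀ = ∅, S_{t+1} = S_t ∪ {a_{t+1}} where a_{t+1} maximizes the marginal gain F(S_t∪{a}) − F(S_t) over a ∈ A∖S_t. Then for each t, F(S_{t+1}) − F(S_t) ≥ (γ/k)·(F(S*) − F(S_t)). -/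
/-!
Let `L = S* \ S`, so `|L| ≤ k`. By the submodularity ratio and monotonicity,
`γ (F S* - F S) ≤ γ (F (S ∪ L) - F S) ≤ ∑_{a ∈ L} Δ(a | S)`, and each of these at most `k`
marginal gains is bounded by the greedy one, which is nonnegative by monotonicity.
-/

open Finset

section

variable {α 𝕜 : Type*} [DecidableEq α] [Field 𝕜] [LinearOrder 𝕜] [IsStrictOrderedRing 𝕜]

def marginalGain (F : Finset α → 𝕜) (S : Finset α) (a : α) : 𝕜 :=
  F (insert a S) - F S

def IsWeaklySubmodular (F : Finset α → 𝕜) (γ : 𝕜) : Prop :=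
  ∀ S L : Finset α, Disjoint L S → γ * (F (S ∪ L) - F S) ≤ ∑ a ∈ L, marginalGain F S a

lemma marginalGain_nonneg {F : Finset α → 𝕜} (hmono : Monotone F) (S : Finset α) (a : α) :
    0 ≤ marginalGain F S a :=
  sub_nonneg.2 (hmono (subset_insert a S))

lemma mul_sub_le_sum_marginalGain_sdiff {F : Finset α → 𝕜} (hmono : Monotone F)
    {γ : 𝕜} (hγ : 0 ≤ γ) (hsub : IsWeaklySubmodular F γ)
    (S T : Finset α) :
    γ * (F T - F S) ≤ ∑ a ∈ T \ S, marginalGain F S a :=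
  calc γ * (F T - F S)
      ≤ γ * (F (S ∪ T \ S) - F S) := by
        gcongr
        exact hmono le_sup_sdiff
    _ ≤ ∑ a ∈ T \ S, marginalGain F S a := hsub S (T \ S) sdiff_disjoint

lemma mul_sub_le_mul_marginalGain_of_card_le {F : Finset α → 𝕜} (hmono : Monotone F)
    {γ : 𝕜} (hγ : 0 ≤ γ) (hsub : IsWeaklySubmodular F γ)
    {S T : Finset α} {k : ℕ} (hT : #T ≤ k) {b : α}
    (hgreedy : ∀ a ∉ S, marginalGain F S a ≤ marginalGain F S b) :
    γ * (F T - F S) ≤ k * marginalGain F S b :=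
  calc γ * (F T - F S)
      ≤ ∑ a ∈ T \ S, marginalGain F S a := mul_sub_le_sum_marginalGain_sdiff hmono hγ hsub S T
    _ ≤ #(T \ S) • marginalGain F S b :=
        sum_le_card_nsmul _ _ _ fun a ha ↦ hgreedy a (mem_sdiff.1 ha).2
    _ ≤ k * marginalGain F S b := by
        rw [nsmul_eq_mul]
        gcongr
        · exact marginalGain_nonneg hmono S b
        · exact (card_le_card sdiff_subset).trans hT

end

theorem greedy_one_step_progress_general
    {α : Type*} [DecidableEq α]
    (F : Finset α → ℝ)
    (hmono : ∀ S T : Finset α, S ⊆ T → F S ≤ F T)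
    (γ : ℝ) (hγ0 : 0 < γ)
    (hsub : ∀ S L : Finset α, Disjoint L S →
      ∑ a ∈ L, (F (insert a S) - F S) ≥ γ * (F (S ∪ L) - F S))
    (k : ℕ)
    (Sstar : Finset α) (hScard : Sstar.card ≤ k)
    (S : Finset α) (astar : α)
    (hgreedy : ∀ a : α, a ∉ S →
      F (insert a S) - F S ≤ F (insert astar S) - F S) :
    F (insert astar S) - F S ≥ (γ / k) * (F Sstar - F S) := by
  have hmono' : Monotone F := fun S T h ↦ hmono S T h
  have hkey : γ * (F Sstar - F S) ≤ marginalGain F S astar * k := by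
    rw [mul_comm _ (k : ℝ)]
    exact mul_sub_le_mul_marginalGain_of_card_le hmono' hγ0.le hsub hScard hgreedy
  -- `div_le_of_le_mul₀` also covers `k = 0`, where `γ / k = 0`.
  rw [ge_iff_le, div_mul_eq_mul_div]
  exact div_le_of_le_mul₀ k.cast_nonneg (marginalGain_nonneg hmono' S astar) hkey

theorem greedy_one_step_progress
    {α : Type*} [Fintype α] [DecidableEq α]
    (F : Finset α → ℝ) (hnorm : F ∅ = 0)
    (hmono : ∀ S T : Finset α, S ⊆ T → F S ≤ F T)
    (γ : ℝ) (hγ0 : 0 < γ) (hγ1 : γ ≤ 1)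
    (hsub : ∀ S L : Finset α, Disjoint L S →
      ∑ a ∈ L, (F (insert a S) - F S) ≥ γ * (F (S ∪ L) - F S))
    (k : ℕ) (hk : 1 ≤ k)
    (Sstar : Finset α) (hScard : Sstar.card ≤ k)
    (hSopt : ∀ T : Finset α, T.card ≤ k → F T ≤ F Sstar)
    (S : Finset α) (astar : α) (hastar : astar ∉ S)
    (hgreedy : ∀ a : α, a ∉ S →
      F (insert a S) - F S ≤ F (insert astar S) - F S) :
    F (insert astar S) - F S ≥ (γ / k) * (F Sstar - F S) :=
  greedy_one_step_progress_general F hmono γ hγ0 hsub k Sstar hScard S astar hgreedy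
end
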